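/- Linear lower bound on the norm along a cone-confined curve: let E be a real inner product space, a ≠ 0, α ∈ (0,1), δ ∈ (0, α‖a‖/2), and let x : [0,T) → E be a C¹ curve with x(t) ∈ C_a(α) = {w : ⟨w,a⟩ ≥ α‖w‖‖a‖} and ‖x'(t) − a‖ < 2δ for all t. Then setting λ = α‖a‖ − 2δ > 0, the function t ↦ ‖x(t)‖ is strictly increasing and ‖x(t)‖ ≥ ‖x(0)‖ + λt for all t ∈ [0,T). -/

import Mathlib

/-!
Wherever `x t ≠ 0`, the derivative of `‖x t‖` is `⟪x t, x' t⟫ / ‖x t‖`, and splitting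
`x' t = a + (x' t - a)` together with the cone condition bounds it below by
`α ‖a‖ - ‖x' t - a‖ > λ`. A barrier argument then keeps `‖x t‖` above the line
`‖x s‖ + λ (t - s)`: at a first contact the norm is positive, hence differentiable, and
grows faster than the line. In particular `x` never vanishes.
-/

open RealInnerProductSpace

open Set Filter Topology in
theorem add_mul_sub_le_of_deriv_right_gt_of_pos {f : ℝ → ℝ} {a b c : ℝ}
    (hf : ContinuousOn f (Icc a b)) (hc : 0 ≤ c) (ha : 0 < f a)
    (hf' : ∀ u ∈ Ico a b, 0 < f u → ∃ d, c < d ∧ HasDerivWithinAt f d (Ici u) u) :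
    ∀ t ∈ Icc a b, f a + c * (t - a) ≤ f t := by
  set B : ℝ → ℝ := fun t => f a + c * (t - a)
  have hB : Continuous B := by fun_prop
  have hclosed : IsClosed ({t | B t ≤ f t} ∩ Icc a b) := by
    rw [inter_comm]
    exact ContinuousOn.preimage_isClosed_of_isClosed (hB.continuousOn.prodMk hf) isClosed_Icc
      OrderClosedTopology.isClosed_le'
  refine fun t ht => hclosed.Icc_subset_of_forall_mem_nhdsWithin (by simp [B]) ?_ ht
  rintro u ⟨hBu : B u ≤ f u, hu⟩
  rcases hBu.lt_or_eq with hlt | heq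
  · have : ∀ᶠ t in 𝓝[Icc a b] u, B t < f t :=
      hB.continuousWithinAt.eventually_lt (hf u (Ico_subset_Icc_self hu)) hlt
    filter_upwards [nhdsWithin_le_of_mem (Icc_mem_nhdsGT_of_mem hu) this] with t ht
    exact ht.le
  · -- at a contact point `f u = B u ≥ f a > 0`, so the right derivative of `f` beats the slope `c`
    obtain ⟨d, hcd, hd⟩ := hf' u hu (heq ▸ by nlinarith [hu.1] : 0 < f u)
    have hslope : ∀ᶠ t in 𝓝[>] u, c < slope f u t :=
      (hasDerivWithinAt_iff_tendsto_slope' (lt_irrefl u)).1 hd.Ioi_of_Ici (Ioi_mem_nhds hcd)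
    filter_upwards [hslope, self_mem_nhdsWithin] with t ht hut
    rw [slope_def_field, lt_div_iff₀ (sub_pos.2 hut)] at ht
    simp only [B] at heq ⊢
    nlinarith

section Cone

variable {E : Type*} [NormedAddCommGroup E] [InnerProductSpace ℝ E]

theorem HasDerivAt.norm_of_ne_zero {x : ℝ → E} {v : E} {t : ℝ} (hx : HasDerivAt x v t)
    (h0 : x t ≠ 0) : HasDerivAt (fun s => ‖x s‖) (⟪x t, v⟫ / ‖x t‖) t := by
  have hnorm : ‖x t‖ ≠ 0 := norm_ne_zero_iff.2 h0
  have h := hx.norm_sq.sqrt (pow_ne_zero 2 hnorm)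
  simp only [Real.sqrt_sq (norm_nonneg _)] at h
  convert h using 1
  field_simp

def cone (a : E) (α : ℝ) : Set E := {w | α * ‖w‖ * ‖a‖ ≤ ⟪w, a⟫}

theorem mul_norm_le_inner_of_mem_cone {a v w : E} {α : ℝ} (hw : w ∈ cone a α) :
    (α * ‖a‖ - ‖v - a‖) * ‖w‖ ≤ ⟪w, v⟫ :=
  calc (α * ‖a‖ - ‖v - a‖) * ‖w‖ = α * ‖w‖ * ‖a‖ - ‖w‖ * ‖v - a‖ := by ring
    _ ≤ ⟪w, a⟫ + ⟪w, v - a⟫ := sub_le_iff_le_add'.2 <| by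
        linarith [hw.out, neg_le_of_abs_le (abs_real_inner_le_norm w (v - a))]
    _ = ⟪w, v⟫ := by rw [← inner_add_right, add_sub_cancel]

theorem lt_div_norm_of_mem_cone {a v w : E} {α ε : ℝ} (hw : w ∈ cone a α) (hw0 : w ≠ 0)
    (hv : ‖v - a‖ < ε) : α * ‖a‖ - ε < ⟪w, v⟫ / ‖w‖ := by
  rw [lt_div_iff₀ (norm_pos_iff.2 hw0)]
  nlinarith [mul_norm_le_inner_of_mem_cone (v := v) hw, norm_pos_iff.2 hw0]

end Cone

theorem stmt19_general {E : Type*} [NormedAddCommGroup E] [InnerProductSpace ℝ E]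
    (a : E) (α δ T : ℝ)
    (hδ : δ ∈ Set.Ioo (0:ℝ) (α * ‖a‖ / 2))
    (x x' : ℝ → E)
    (hx : ∀ t ∈ Set.Ico (0:ℝ) T, HasDerivAt x (x' t) t)
    (hcone : ∀ t ∈ Set.Ico (0:ℝ) T, ⟪x t, a⟫ ≥ α * ‖x t‖ * ‖a‖)
    (hvel : ∀ t ∈ Set.Ico (0:ℝ) T, ‖x' t - a‖ < 2 * δ)
    (hx0 : x 0 ≠ 0) :
    StrictMonoOn (fun t => ‖x t‖) (Set.Ico 0 T) ∧
      ∀ t ∈ Set.Ico (0:ℝ) T, ‖x 0‖ + (α * ‖a‖ - 2 * δ) * t ≤ ‖x t‖ := by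
  have hlam : 0 < α * ‖a‖ - 2 * δ := by linarith [hδ.2]
  have hgrowth : ∀ s ∈ Set.Ico (0:ℝ) T, x s ≠ 0 → ∀ t ∈ Set.Ico (0:ℝ) T, s ≤ t →
      ‖x s‖ + (α * ‖a‖ - 2 * δ) * (t - s) ≤ ‖x t‖ := by
    intro s hs hxs t ht hst
    have hsub : Set.Icc s t ⊆ Set.Ico 0 T := Set.Icc_subset_Ico hs.1 ht.2
    refine add_mul_sub_le_of_deriv_right_gt_of_pos (f := fun u => ‖x u‖) (fun u hu => ?_)
      hlam.le (norm_pos_iff.2 hxs) (fun u hu hpos => ?_) t ⟨hst, le_rfl⟩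
    · exact (hx u (hsub hu)).continuousAt.norm.continuousWithinAt
    · have hu' := hsub (Set.Ico_subset_Icc_self hu)
      have hxu := norm_pos_iff.1 hpos
      exact ⟨_, lt_div_norm_of_mem_cone (hcone u hu') hxu (hvel u hu'),
        ((hx u hu').norm_of_ne_zero hxu).hasDerivWithinAt⟩
  have hbound : ∀ t ∈ Set.Ico (0:ℝ) T, ‖x 0‖ + (α * ‖a‖ - 2 * δ) * t ≤ ‖x t‖ := fun t ht => by
    simpa using hgrowth 0 (Set.left_mem_Ico.2 (ht.1.trans_lt ht.2)) hx0 t ht ht.1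
  refine ⟨fun s hs t ht hst => ?_, hbound⟩
  have hxs : x s ≠ 0 := norm_pos_iff.1 <| (norm_pos_iff.2 hx0).trans_le <|
    (le_add_of_nonneg_right (mul_nonneg hlam.le hs.1)).trans (hbound s hs)
  nlinarith [hgrowth s hs hxs t ht hst.le]

/-- Linear lower bound on the norm along a cone-confined curve. -/
theorem stmt19 {E : Type*} [NormedAddCommGroup E] [InnerProductSpace ℝ E]
    (a : E) (ha : a ≠ 0) (α δ T : ℝ) (hα : α ∈ Set.Ioo (0:ℝ) 1)
    (hδ : δ ∈ Set.Ioo (0:ℝ) (α * ‖a‖ / 2)) (hT : 0 < T)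
    (x x' : ℝ → E)
    (hx : ∀ t ∈ Set.Ico (0:ℝ) T, HasDerivAt x (x' t) t)
    (hx'c : ContinuousOn x' (Set.Ico 0 T))
    (hcone : ∀ t ∈ Set.Ico (0:ℝ) T, ⟪x t, a⟫ ≥ α * ‖x t‖ * ‖a‖)
    (hvel : ∀ t ∈ Set.Ico (0:ℝ) T, ‖x' t - a‖ < 2 * δ)
    (hx0 : x 0 ≠ 0) :
    StrictMonoOn (fun t => ‖x t‖) (Set.Ico 0 T) ∧
      ∀ t ∈ Set.Ico (0:ℝ) T, ‖x 0‖ + (α * ‖a‖ - 2 * δ) * t ≤ ‖x t‖ :=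
  stmt19_general a α δ T hδ x x' hx hcone hvel hx0
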